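/- arXiv:0806.0966 — 5 statements merged into one kernel-verified Lean document; each statement's English description precedes it below -/
import Mathlib

section
/- If H is a finite-index subgroup of a finitely generated nilpotent group G, then the commutator subgroup [H,H] has finite index in the commutator subgroup [G,G]. -/
/-!
Replacing `H` by its normal core `K` and `G` by `G ⧸ ⁅K, K⁆`, it suffices to show that a finitely
generated nilpotent group `G` with an abelian subgroup `A` of finite index has finite commutator
subgroup. By induction on the nilpotency class, `⁅G, G⁆` has finite image in `G ⧸ Z(G)`, so it
remains to see that `⁅G, G⁆ ⊓ Z(G)` is finite. The transfer `G → A` kills `⁅G, G⁆` and sends a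
central `z` to `z ^ [G : A]`, so `⁅G, G⁆ ⊓ Z(G)` has exponent dividing `[G : A]`. Its intersection
with the finitely generated abelian group `A` is therefore finite, and has finite index in it.
-/

section

open Subgroup QuotientGroup
open scoped IsMulCommutative commutatorElement

theorem CommGroup.fg_subgroup {A : Type*} [CommGroup A] [Group.FG A] (B : Subgroup A) :
    Group.FG B := by
  have : Module.Finite ℤ (Additive A) := Module.Finite.iff_addGroup_fg.mpr inferInstance
  rw [Group.fg_iff_subgroup_fg, Subgroup.fg_iff_add_fg,
    ← AddSubgroup.toIntSubmodule_toAddSubgroup B.toAddSubgroup, ← Submodule.fg_iff_addSubgroup_fg]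
  exact IsNoetherian.noetherian _

variable {G : Type*} [Group G]

namespace Subgroup

theorem finite_subgroupOf_iff {H K : Subgroup G} : Finite (H.subgroupOf K) ↔ Finite ↥(H ⊓ K) := by
  rw [← subgroupOf_map_subtype]
  exact ((H.subgroupOf K).equivMapOfInjective _ K.subtype_injective).finite_iff

theorem finite_of_le_of_isMulTorsion {A T : Subgroup G} [Group.FG A] [IsMulCommutative A]
    (hTA : T ≤ A) (hT : IsMulTorsion T) : Finite T := by
  have := CommGroup.fg_subgroup (T.subgroupOf A)
  have := CommGroup.finite_of_fg_isMulTorsion _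
    (hT.of_surjective (f := (subgroupOfEquivOfLe hTA).symm.toMonoidHom) (MulEquiv.surjective _))
  exact (subgroupOfEquivOfLe hTA).finite_iff.mp this

theorem finite_of_finite_inf_ker_of_finite_map {G' : Type*} [Group G'] (f : G →* G')
    {H : Subgroup G} (hker : Finite ↥(H ⊓ f.ker)) (hmap : Finite (H.map f)) : Finite H := by
  rw [(f.domRestrict H).finite_iff_finite_ker_range, MonoidHom.ker_domRestrict,
    MonoidHom.domRestrict_range, finite_subgroupOf_iff, inf_comm]
  exact ⟨hker, hmap⟩

theorem finiteIndex_map_of_surjective {G' : Type*} [Group G'] {f : G →* G'}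
    (hf : Function.Surjective f) (H : Subgroup G) [H.FiniteIndex] : (H.map f).FiniteIndex :=
  ⟨ne_zero_of_dvd_ne_zero FiniteIndex.index_ne_zero (H.index_map_dvd hf)⟩

end Subgroup

theorem pow_index_eq_one_of_mem_commutator_of_mem_center (A : Subgroup G) [A.FiniteIndex]
    [IsMulCommutative A] {z : G} (hzc : z ∈ commutator G) (hzZ : z ∈ center G) :
    z ^ A.index = 1 := by
  have htransfer := MonoidHom.transfer_eq_pow (MonoidHom.id A) z fun k g _ => by
    rw [mul_assoc, ← mem_center_iff.mp (pow_mem hzZ k) g, inv_mul_cancel_left]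
  rw [Abelianization.commutator_subset_ker _ hzc, MonoidHom.id_apply] at htransfer
  exact congrArg Subtype.val htransfer.symm

theorem finite_commutator_inf_center [Group.FG G] (A : Subgroup G) [A.FiniteIndex]
    [IsMulCommutative A] : Finite ↥(commutator G ⊓ center G) := by
  rw [finite_iff_finite_and_finiteIndex (A.subgroupOf _), finite_subgroupOf_iff]
  refine ⟨finite_of_le_of_isMulTorsion inf_le_left fun x => ?_, inferInstance⟩
  obtain ⟨-, hxc, hxZ⟩ := x.2
  refine isOfFinOrder_iff_pow_eq_one.mpr
    ⟨A.index, Nat.pos_of_ne_zero FiniteIndex.index_ne_zero, Subtype.ext ?_⟩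
  exact pow_index_eq_one_of_mem_commutator_of_mem_center A hxc hxZ

theorem finite_commutator_of_isNilpotent [Group.IsNilpotent G] [Group.FG G] (A : Subgroup G)
    [A.FiniteIndex] [IsMulCommutative A] : Finite (commutator G) := by
  revert A
  refine Group.nilpotent_center_quotient_ind (P := fun G _ _ => ∀ [Group.FG G] (A : Subgroup G)
    [A.FiniteIndex] [IsMulCommutative A], Finite (commutator G)) G ?_ ?_
  · intro G _ _ _ _ _ _
    infer_instance
  · intro G _ _ ih _ A _ _
    have := finiteIndex_map_of_surjective (mk'_surjective (center G)) A
    have hquot : Finite (commutator (G ⧸ center G)) := ih (A.map (mk' (center G)))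
    refine finite_of_finite_inf_ker_of_finite_map (mk' (center G)) ?_ ?_
    · rw [ker_mk']
      exact finite_commutator_inf_center A
    · rwa [map_commutator_eq, range_mk', ← _root_.commutator_def]

theorem isMulCommutative_map_mk'_commutator (K : Subgroup G) [K.Normal] :
    IsMulCommutative (K.map (mk' ⁅K, K⁆)) := by
  refine isMulCommutative_iff.mpr ?_
  rintro ⟨_, a, ha, rfl⟩ ⟨_, b, hb, rfl⟩
  have hab : mk' ⁅K, K⁆ ⁅a, b⁆ = 1 := (eq_one_iff _).mpr (commutator_mem_commutator ha hb)
  rw [map_commutatorElement, commutatorElement_eq_one_iff_mul_comm] at hab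
  exact Subtype.ext hab

theorem relIndex_commutator_ne_zero [Group.IsNilpotent G] [Group.FG G] (K : Subgroup G)
    [K.Normal] [K.FiniteIndex] : ⁅K, K⁆.relIndex (commutator G) ≠ 0 := by
  have := finiteIndex_map_of_surjective (mk'_surjective ⁅K, K⁆) K
  have := isMulCommutative_map_mk'_commutator K
  have := finite_commutator_of_isNilpotent (K.map (mk' ⁅K, K⁆))
  rw [← ker_mk' ⁅K, K⁆, relIndex_ker, map_commutator_eq, range_mk', ← _root_.commutator_def]
  exact Nat.card_pos.ne'

end

/-- If `H` is a finite-index subgroup of a finitely generated nilpotent group `G`,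
then `[H,H]` has finite index in `[G,G]`. -/
theorem stmt2 {G : Type*} [Group G] [Group.IsNilpotent G] (hFG : Group.FG G)
    (H : Subgroup G) (hH : H.FiniteIndex) :
    (⁅H, H⁆ : Subgroup G).relIndex (commutator G) ≠ 0 :=
  mt (Subgroup.relIndex_eq_zero_of_le_left
      (Subgroup.commutator_mono H.normalCore_le H.normalCore_le))
    (relIndex_commutator_ne_zero H.normalCore)
end

section
/- In the discrete Heisenberg group H₃ with word metric d from S = {a, b, a⁻¹, b⁻¹}: if w is a word with all letters in {a, b} representing the group element c^z b^y a^x, then d(e, c^z b^y a^x) = x + y = |w|; hence every word in the letters a, b is geodesic. -/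
/-- The discrete Heisenberg group `H₃`: `⟨x, y, z⟩` encodes the 3×3 upper unitriangular
integer matrix `(1 x z; 0 1 y; 0 0 1)`, with matrix multiplication. -/
@[ext] structure Heis where
  x : ℤ
  y : ℤ
  z : ℤ

namespace Heis

instance : Mul Heis := ⟨fun p q => ⟨p.x + q.x, p.y + q.y, p.z + q.z + p.x * q.y⟩⟩
instance : One Heis := ⟨⟨0, 0, 0⟩⟩
instance : Inv Heis := ⟨fun p => ⟨-p.x, -p.y, p.x * p.y - p.z⟩⟩

theorem mul_def (p q : Heis) :
    p * q = ⟨p.x + q.x, p.y + q.y, p.z + q.z + p.x * q.y⟩ := rfl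
theorem one_def : (1 : Heis) = ⟨0, 0, 0⟩ := rfl
theorem inv_def (p : Heis) : p⁻¹ = ⟨-p.x, -p.y, p.x * p.y - p.z⟩ := rfl

instance : Group Heis where
  mul_assoc p q r := by
    simp only [mul_def, mk.injEq]
    refine ⟨by ring, by ring, by ring⟩
  one_mul p := by
    obtain ⟨px, py, pz⟩ := p
    simp only [one_def, mul_def, mk.injEq]
    refine ⟨by ring, by ring, by ring⟩
  mul_one p := by
    obtain ⟨px, py, pz⟩ := p
    simp only [one_def, mul_def, mk.injEq]
    refine ⟨by ring, by ring, by ring⟩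
  inv_mul_cancel p := by
    obtain ⟨px, py, pz⟩ := p
    simp only [inv_def, mul_def, one_def, mk.injEq]
    refine ⟨by ring, by ring, by ring⟩

/-- The generator `a` (the elementary matrix with a `1` in position (1,2)). -/
def a : Heis := ⟨1, 0, 0⟩
/-- The generator `b` (the elementary matrix with a `1` in position (2,3)). -/
def b : Heis := ⟨0, 1, 0⟩
/-- The commutator `c = [a,b] = a⁻¹b⁻¹ab` (the elementary matrix with a `1` in (1,3)). -/
def c : Heis := ⟨0, 0, 1⟩

/-- The standard generating set `S = {a, b, a⁻¹, b⁻¹}`. -/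
def S : Set Heis := {a, b, a⁻¹, b⁻¹}

/-- The word metric for the generating set `S`: the length of the shortest word with
letters in `S` leading from `g` to `h` in the Cayley graph. -/
noncomputable def wdist (g h : Heis) : ℕ :=
  sInf {n | ∃ l : List Heis, (∀ s ∈ l, s ∈ S) ∧ l.length = n ∧ g * l.prod = h}


end Heis

/-!
Every generator in `S` moves the abelianized coordinates `(x, y)` by one unit step, so
`|x| + |y| ≤ d(e, g)` for every `g`. A word in the positive letters `a, b` has `x, y ≥ 0` and
length `x + y`, so it attains this lower bound and is geodesic.
-/

namespace Heis

theorem a_zpow (n : ℤ) : a ^ n = ⟨n, 0, 0⟩ := by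
  induction n using Int.induction_on with
  | zero => rfl
  | succ k ih => rw [zpow_add_one, ih]; simp [a, mul_def]
  | pred k ih => rw [sub_eq_add_neg, zpow_add, ih, zpow_neg_one]; simp [a, inv_def, mul_def]

theorem b_zpow (n : ℤ) : b ^ n = ⟨0, n, 0⟩ := by
  induction n using Int.induction_on with
  | zero => rfl
  | succ k ih => rw [zpow_add_one, ih]; simp [b, mul_def]
  | pred k ih => rw [sub_eq_add_neg, zpow_add, ih, zpow_neg_one]; simp [b, inv_def, mul_def]

theorem c_zpow (n : ℤ) : c ^ n = ⟨0, 0, n⟩ := by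
  induction n using Int.induction_on with
  | zero => rfl
  | succ k ih => rw [zpow_add_one, ih]; simp [c, mul_def]
  | pred k ih => rw [sub_eq_add_neg, zpow_add, ih, zpow_neg_one]; simp [c, inv_def, mul_def]

theorem c_zpow_mul_b_zpow_mul_a_zpow (x y z : ℤ) : c ^ z * b ^ y * a ^ x = ⟨x, y, z⟩ := by
  simp [a_zpow, b_zpow, c_zpow, mul_def]

theorem abs_x_add_abs_y_of_mem_S {s : Heis} (hs : s ∈ S) : |s.x| + |s.y| = 1 := by
  rcases hs with rfl | rfl | rfl | rfl <;> simp [a, b, inv_def]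

theorem abs_x_add_abs_y_le_length {l : List Heis} (hl : ∀ s ∈ l, s ∈ S) :
    |l.prod.x| + |l.prod.y| ≤ l.length := by
  induction l with
  | nil => simp [one_def]
  | cons s t ih =>
    have hs := abs_x_add_abs_y_of_mem_S (hl s List.mem_cons_self)
    have ht := ih fun u hu => hl u (List.mem_cons_of_mem _ hu)
    simp only [List.prod_cons, mul_def, List.length_cons, Nat.cast_succ]
    linarith [abs_add_le s.x t.prod.x, abs_add_le s.y t.prod.y]

theorem abs_x_add_abs_y_le_wdist_one {g : Heis}
    (hg : ∃ l : List Heis, (∀ s ∈ l, s ∈ S) ∧ l.prod = g) :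
    |g.x| + |g.y| ≤ wdist 1 g := by
  obtain ⟨l, hlS, hlen, hl⟩ := Nat.sInf_mem (s := {n | ∃ l : List Heis,
    (∀ s ∈ l, s ∈ S) ∧ l.length = n ∧ 1 * l.prod = g}) <| by
      obtain ⟨l, hlS, hl⟩ := hg
      exact ⟨l.length, l, hlS, rfl, by rw [one_mul, hl]⟩
  rw [one_mul] at hl
  rw [wdist, ← hlen, ← hl]
  exact abs_x_add_abs_y_le_length hlS

theorem wdist_one_prod_le_length {l : List Heis} (hl : ∀ s ∈ l, s ∈ S) :
    wdist 1 l.prod ≤ l.length :=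
  Nat.sInf_le ⟨l, hl, rfl, one_mul _⟩

section PositiveWords

variable {w : List Heis}

theorem mem_S_of_positive_word (hw : ∀ s ∈ w, s = a ∨ s = b) :
    ∀ s ∈ w, s ∈ S := fun s hs => by
  rcases hw s hs with rfl | rfl
  exacts [Or.inl rfl, Or.inr (Or.inl rfl)]

theorem length_eq_prod_x_add_prod_y (hw : ∀ s ∈ w, s = a ∨ s = b) :
    0 ≤ w.prod.x ∧ 0 ≤ w.prod.y ∧ (w.length : ℤ) = w.prod.x + w.prod.y := by
  induction w with
  | nil => simp [one_def]
  | cons s t ih =>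
    obtain ⟨hx, hy, hlen⟩ := ih fun u hu => hw u (List.mem_cons_of_mem _ hu)
    rcases hw s List.mem_cons_self with rfl | rfl <;>
      simp only [List.prod_cons, a, b, mul_def, List.length_cons, Nat.cast_succ] <;>
      omega

theorem wdist_one_prod_eq_length (hw : ∀ s ∈ w, s = a ∨ s = b) :
    wdist 1 w.prod = w.length := by
  have hS := mem_S_of_positive_word hw
  refine le_antisymm (wdist_one_prod_le_length hS) ?_
  obtain ⟨hx, hy, hlen⟩ := length_eq_prod_x_add_prod_y hw
  have := abs_x_add_abs_y_le_wdist_one ⟨w, hS, rfl⟩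
  rw [abs_of_nonneg hx, abs_of_nonneg hy, ← hlen] at this
  exact_mod_cast this

end PositiveWords

end Heis

open Heis in
theorem stmt10_general
    (w : List Heis) (hw : ∀ s ∈ w, s = a ∨ s = b)
    (x y z : ℤ) (hrep : w.prod = c ^ z * b ^ y * a ^ x) :
    (wdist 1 w.prod : ℤ) = x + y ∧ (w.length : ℤ) = x + y := by
  rw [c_zpow_mul_b_zpow_mul_a_zpow] at hrep
  have hlen := (length_eq_prod_x_add_prod_y hw).2.2
  rw [hrep] at hlen
  rw [wdist_one_prod_eq_length hw]
  exact ⟨hlen, hlen⟩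

open Heis in
/-- Assuming case I.2.1 of Blachère's formula: if `w` is a word with all letters in `{a,b}`
representing `c^z b^y a^x`, then `d(e, c^z b^y a^x) = x + y = |w|`; hence every word in the
letters `a, b` is geodesic. -/
theorem stmt10
    (hB : ∀ x y z : ℤ, 0 ≤ z * y * x → |z| ≤ max (x ^ 2) (y ^ 2) → |z| ≤ |x * y| →
      (wdist 1 (c ^ z * b ^ y * a ^ x) : ℤ) = |x| + |y|)
    (w : List Heis) (hw : ∀ s ∈ w, s = a ∨ s = b)
    (x y z : ℤ) (hrep : w.prod = c ^ z * b ^ y * a ^ x) :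
    (wdist 1 w.prod : ℤ) = x + y ∧ (w.length : ℤ) = x + y :=
  stmt10_general w hw x y z hrep
end

section
/- Let (X,d) be a metric space with base-point e, and let ξ be a horofunction that is the pointwise limit of ψ_{zₙ} where ψ_z(x) = d(x,z) − d(e,z). Say an isometry g of X fixes ξ if ξ(g⁻¹x) − ξ(g⁻¹e) = ξ(x) for all x. Then the restriction of ξ to the orbit of e under the stabiliser subgroup of ξ satisfies ξ(g·h·e) = ξ(g·e) + ξ(h·e) for all g, h in the stabiliser. -/
/-- Let `ξ` be a horofunction of a metric space `X` with base-point `e`, i.e. the pointwise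
limit of `ψ_{zₙ}` where `ψ_z(x) = d(x,z) − d(e,z)`.  If the isometries `g` and `h` both fix
`ξ` (that is, `ξ(g⁻¹ x) − ξ(g⁻¹ e) = ξ(x)` for all `x`), then
`ξ(g (h e)) = ξ(g e) + ξ(h e)`. -/
theorem stmt12 {X : Type*} [MetricSpace X] (e : X) (ξ : X → ℝ) (zs : ℕ → X)
    (hlim : ∀ x : X, Filter.Tendsto (fun n => dist x (zs n) - dist e (zs n))
      Filter.atTop (nhds (ξ x)))
    (g h : X ≃ᵢ X)
    (hg : ∀ x : X, ξ (g.symm x) - ξ (g.symm e) = ξ x)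
    (hh : ∀ x : X, ξ (h.symm x) - ξ (h.symm e) = ξ x) :
    ξ (g (h e)) = ξ (g e) + ξ (h e) := by
  have he : ξ e = 0 := by
    have := hlim e
    simp only [sub_self] at this
    have h0 : Filter.Tendsto (fun _ : ℕ => (0:ℝ)) Filter.atTop (nhds 0) :=
      tendsto_const_nhds
    exact tendsto_nhds_unique this h0
  have h1 := hg (g (h e))
  have h2 := hg (g e)
  simp only [IsometryEquiv.symm_apply_apply] at h1 h2
  rw [he] at h2
  linarith
end

section
/- Every infinite geodesic word in the discrete Heisenberg group H₃ with generating set S = {a,b,a⁻¹,b⁻¹} either has exactly two elements of S occurring infinitely often with all its letters drawn from at most two elements of S, or consists of a finite prefix followed by infinitely many repetitions of a single letter. Equivalently: no infinite geodesic word uses three or more elements of S as letters with at least two occurring infinitely often. -/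
namespace Heis

instance : DecidableEq Heis := fun _ _ => decidable_of_iff _ Heis.ext_iff.symm

@[simp] lemma mul_x (p q : Heis) : (p * q).x = p.x + q.x := rfl
@[simp] lemma mul_y (p q : Heis) : (p * q).y = p.y + q.y := rfl
@[simp] lemma mul_z (p q : Heis) : (p * q).z = p.z + q.z + p.x * q.y := rfl
@[simp] lemma one_x : (1 : Heis).x = 0 := rfl
@[simp] lemma one_y : (1 : Heis).y = 0 := rfl
@[simp] lemma one_z : (1 : Heis).z = 0 := rfl

@[simp] lemma inv_mk (x y z : ℤ) : (⟨x, y, z⟩ : Heis)⁻¹ = ⟨-x, -y, x * y - z⟩ := rfl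

lemma a_ne_inv_a : a ≠ a⁻¹ := by decide
lemma a_ne_inv_b : a ≠ b⁻¹ := by decide
lemma b_ne_inv_a : b ≠ a⁻¹ := by decide
lemma b_ne_inv_b : b ≠ b⁻¹ := by decide

lemma mem_S_iff {s : Heis} : s ∈ S ↔ s = a ∨ s = b ∨ s = a⁻¹ ∨ s = b⁻¹ := Iff.rfl

lemma inv_mem_S {s : Heis} (hs : s ∈ S) : s⁻¹ ∈ S := by
  rcases hs with rfl | rfl | rfl | rfl <;> simp [S]

lemma finite_S : S.Finite := by simp [S]

lemma pow_of_mem_S {s : Heis} (hs : s ∈ S) (n : ℕ) : s ^ n = ⟨n * s.x, n * s.y, 0⟩ := by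
  have hxy : s.x * s.y = 0 ∧ s.z = 0 := by
    rcases hs with rfl | rfl | rfl | rfl <;> simp [a, b, inv_def]
  induction n with
  | zero => simp [one_def]
  | succ n ih =>
    rw [pow_succ, ih]
    ext
    · simp only [mul_x, Nat.cast_add, Nat.cast_one]; ring
    · simp only [mul_y, Nat.cast_add, Nat.cast_one]; ring
    · simp only [mul_z, hxy.2]; linear_combination (n : ℤ) * hxy.1

@[simp] lemma a_pow (n : ℕ) : a ^ n = ⟨n, 0, 0⟩ := by rw [pow_of_mem_S (by simp [S])]; simp [a]
@[simp] lemma b_pow (n : ℕ) : b ^ n = ⟨0, n, 0⟩ := by rw [pow_of_mem_S (by simp [S])]; simp [b]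

def flipA : Heis ≃* Heis where
  toFun p := ⟨-p.x, p.y, -p.z⟩
  invFun p := ⟨-p.x, p.y, -p.z⟩
  left_inv p := by simp
  right_inv p := by simp
  map_mul' p q := by ext <;> simp <;> ring

def flipB : Heis ≃* Heis where
  toFun p := ⟨p.x, -p.y, -p.z⟩
  invFun p := ⟨p.x, -p.y, -p.z⟩
  left_inv p := by simp
  right_inv p := by simp
  map_mul' p q := by ext <;> simp <;> ring

def swapAB : Heis ≃* Heis where
  toFun p := ⟨p.y, p.x, p.x * p.y - p.z⟩
  invFun p := ⟨p.y, p.x, p.x * p.y - p.z⟩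
  left_inv p := by ext <;> simp [mul_comm]
  right_inv p := by ext <;> simp [mul_comm]
  map_mul' p q := by ext <;> simp; ring

@[simp] lemma flipA_a : flipA a = a⁻¹ := by ext <;> simp [flipA, a, inv_def]
@[simp] lemma flipA_b : flipA b = b := by simp [flipA, b]
@[simp] lemma flipB_a : flipB a = a := by simp [flipB, a]
@[simp] lemma flipB_b : flipB b = b⁻¹ := by ext <;> simp [flipB, b, inv_def]
@[simp] lemma swapAB_a : swapAB a = b := by simp [swapAB, a, b]
@[simp] lemma swapAB_b : swapAB b = a := by simp [swapAB, a, b]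

@[simp] lemma flipB_flipB (p : Heis) : flipB (flipB p) = p := flipB.left_inv p

def PreservesS (f : Heis ≃* Heis) : Prop := ∀ g, f g ∈ S ↔ g ∈ S

lemma PreservesS.trans {f g : Heis ≃* Heis} (hf : PreservesS f) (hg : PreservesS g) :
    PreservesS (f.trans g) := fun p => (hg (f p)).trans (hf p)

lemma PreservesS.of_involutive {f : Heis ≃* Heis} (hf : ∀ p, f (f p) = p) (ha : f a ∈ S)
    (hb : f b ∈ S) : PreservesS f := by
  have hS : ∀ s ∈ S, f s ∈ S := by
    rintro s (rfl | rfl | rfl | rfl) <;> simp [ha, hb, inv_mem_S]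
  exact fun p => ⟨fun h => hf p ▸ hS _ h, hS p⟩

lemma preservesS_flipA : PreservesS flipA :=
  .of_involutive (flipA.left_inv ·) (by simp [S]) (by simp [S])

lemma preservesS_flipB : PreservesS flipB :=
  .of_involutive (flipB.left_inv ·) (by simp [S]) (by simp [S])

lemma preservesS_swapAB : PreservesS swapAB :=
  .of_involutive (swapAB.left_inv ·) (by simp [S]) (by simp [S])

lemma exists_preservesS_apply_eq_a {s : Heis} (hs : s ∈ S) :
    ∃ f : Heis ≃* Heis, PreservesS f ∧ f s = a := by
  rcases hs with rfl | rfl | rfl | rfl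
  · exact ⟨MulEquiv.refl _, fun _ => Iff.rfl, rfl⟩
  · exact ⟨swapAB, preservesS_swapAB, swapAB_b⟩
  · exact ⟨flipA, preservesS_flipA, by simp⟩
  · exact ⟨flipB.trans swapAB, preservesS_flipB.trans preservesS_swapAB, by simp⟩

lemma exists_preservesS_apply_eq_a_and_apply_eq_b {s t : Heis} (hs : s ∈ S) (ht : t ∈ S)
    (hst : s ≠ t) (hts : t ≠ s⁻¹) : ∃ f : Heis ≃* Heis, PreservesS f ∧ f s = a ∧ f t = b := by
  obtain ⟨f, hf, hfs⟩ := exists_preservesS_apply_eq_a hs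
  have hfa : f t ≠ a := hfs ▸ f.injective.ne hst.symm
  have hfai : f t ≠ a⁻¹ := by rw [← hfs, ← map_inv]; exact f.injective.ne hts
  rcases mem_S_iff.mp ((hf t).2 ht) with h | h | h | h
  · exact absurd h hfa
  · exact ⟨f, hf, hfs, h⟩
  · exact absurd h hfai
  · exact ⟨f.trans flipB, hf.trans preservesS_flipB, by simp [hfs], by simp [h]⟩

section Words

variable {l : List Heis}

lemma prod_x_eq_count (hl : ∀ s ∈ l, s ∈ S) : l.prod.x = l.count a - l.count a⁻¹ := by
  induction l with
  | nil => simp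
  | cons s l ih =>
    simp only [List.forall_mem_cons] at hl
    rcases hl.1 with rfl | rfl | rfl | rfl <;>
      simp [ih hl.2, a, b, inv_def] <;> ring

lemma prod_y_eq_count (hl : ∀ s ∈ l, s ∈ S) : l.prod.y = l.count b - l.count b⁻¹ := by
  induction l with
  | nil => simp
  | cons s l ih =>
    simp only [List.forall_mem_cons] at hl
    rcases hl.1 with rfl | rfl | rfl | rfl <;>
      simp [ih hl.2, a, b, inv_def] <;> ring

lemma prod_z_le_count (hl : ∀ s ∈ l, s ∈ S) :
    l.prod.z ≤ l.count a * l.count b + l.count a⁻¹ * l.count b⁻¹ := by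
  induction l with
  | nil => simp
  | cons s l ih =>
    simp only [List.forall_mem_cons] at hl
    have hy := prod_y_eq_count hl.2
    have := ih hl.2
    rcases hl.1 with rfl | rfl | rfl | rfl <;>
      simp [a, b, inv_def] at hy this ⊢ <;> nlinarith

def IsPositiveWord (l : List Heis) : Prop := ∀ s ∈ l, s = a ∨ s = b

lemma IsPositiveWord.forall_mem_S (hl : IsPositiveWord l) : ∀ s ∈ l, s ∈ S := fun s hs => by
  rcases hl s hs with rfl | rfl <;> simp [S]

lemma IsPositiveWord.count_inv_a (hl : IsPositiveWord l) : l.count a⁻¹ = 0 :=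
  List.count_eq_zero.2 fun h => (hl _ h).elim (a_ne_inv_a ·.symm) (b_ne_inv_a ·.symm)

lemma IsPositiveWord.count_inv_b (hl : IsPositiveWord l) : l.count b⁻¹ = 0 :=
  List.count_eq_zero.2 fun h => (hl _ h).elim (a_ne_inv_b ·.symm) (b_ne_inv_b ·.symm)

lemma IsPositiveWord.prod_z_nonneg (hl : IsPositiveWord l) : 0 ≤ l.prod.z := by
  induction l with
  | nil => simp
  | cons s l ih =>
    have hl' : IsPositiveWord l := fun s hs => hl s (List.mem_cons_of_mem _ hs)
    have hy : 0 ≤ l.prod.y := by simp [prod_y_eq_count hl'.forall_mem_S, hl'.count_inv_b]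
    rcases hl s List.mem_cons_self with rfl | rfl <;> simp [a, b] <;> linarith [ih hl']

lemma IsPositiveWord.count_b_le_prod_z_append {u v : List Heis} (hu : IsPositiveWord u)
    (hv : IsPositiveWord v) (ha : 2 ≤ u.count a) (hb : u.count b ≤ v.count b) :
    ((u ++ v).count b : ℤ) ≤ (u ++ v).prod.z := by
  have hzu := hu.prod_z_nonneg
  have hzv := hv.prod_z_nonneg
  rw [List.prod_append, mul_z, prod_x_eq_count hu.forall_mem_S, prod_y_eq_count hv.forall_mem_S,
    hu.count_inv_a, hv.count_inv_b, List.count_append]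
  push_cast
  nlinarith

lemma prod_x_eq_of_perm {l₁ l₂ : List Heis} (hp : l₁.Perm l₂) (hS : ∀ s ∈ l₁, s ∈ S) :
    l₁.prod.x = l₂.prod.x := by
  rw [prod_x_eq_count hS, prod_x_eq_count fun s hs => hS s (hp.mem_iff.2 hs), hp.count_eq,
    hp.count_eq]

lemma prod_y_eq_of_perm {l₁ l₂ : List Heis} (hp : l₁.Perm l₂) (hS : ∀ s ∈ l₁, s ∈ S) :
    l₁.prod.y = l₂.prod.y := by
  rw [prod_y_eq_count hS, prod_y_eq_count fun s hs => hS s (hp.mem_iff.2 hs), hp.count_eq,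
    hp.count_eq]

lemma abs_x_mul_y_sub_x_mul_y_le_one {s t : Heis} (hs : s ∈ S) (ht : t ∈ S) :
    |s.x * t.y - t.x * s.y| ≤ 1 := by
  rcases hs with rfl | rfl | rfl | rfl <;> rcases ht with rfl | rfl | rfl | rfl <;>
    simp [a, b, inv_def]

/-- Adjacent transpositions change the `z`-coordinate of a word over `S` by at most one, so the
`z`-coordinates of the rearrangements of a word form an interval. -/
lemma exists_perm_prod_z_eq {l₁ l₂ : List Heis} (hp : l₁.Perm l₂) (hS : ∀ s ∈ l₁, s ∈ S) {z : ℤ}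
    (hz : z ∈ Set.uIcc l₁.prod.z l₂.prod.z) : ∃ l : List Heis, l.Perm l₁ ∧ l.prod.z = z := by
  induction hp generalizing z with
  | nil => exact ⟨[], .nil, by simpa [eq_comm] using hz⟩
  | @cons s l₁ l₂ hp ih =>
    simp only [List.forall_mem_cons] at hS
    have hy := prod_y_eq_of_perm hp hS.2
    obtain ⟨l, hl, hlz⟩ := ih hS.2 (z := z - s.z - s.x * l₁.prod.y) (by
      simp only [List.prod_cons, mul_z, Set.mem_uIcc] at hz ⊢
      rw [← hy] at hz
      omega)
    refine ⟨s :: l, hl.cons s, ?_⟩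
    have := prod_y_eq_of_perm hl fun s hs => hS.2 s (hl.mem_iff.1 hs)
    simp only [List.prod_cons, mul_z, hlz, this]
    ring
  | swap s t l =>
    simp only [List.forall_mem_cons] at hS
    have h1 := abs_x_mul_y_sub_x_mul_y_le_one hS.1 hS.2.1
    have h2 : (t * (s * l.prod)).z - (s * (t * l.prod)).z = t.x * s.y - s.x * t.y := by
      simp only [mul_z, mul_y]; ring
    simp only [List.prod_cons, Set.mem_uIcc, abs_le] at hz h1
    rcases (by omega : z = (t * (s * l.prod)).z ∨ z = (s * (t * l.prod)).z) with h | h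
    · exact ⟨t :: s :: l, .refl _, by simp [h]⟩
    · exact ⟨s :: t :: l, .swap t s l, by simp [h]⟩
  | trans h₁₂ h₂₃ ih₁₂ ih₂₃ =>
    rcases Set.uIcc_subset_uIcc_union_uIcc hz with hz | hz
    · exact ih₁₂ hS hz
    · obtain ⟨l, hl, hlz⟩ := ih₂₃ (fun s hs => hS s (h₁₂.mem_iff.2 hs)) hz
      exact ⟨l, hl.trans h₁₂.symm, hlz⟩

end Words

def blockWord (α β γ δ : ℕ) : List Heis :=
  .replicate α a ++ .replicate β b ++ .replicate γ a⁻¹ ++ .replicate δ b⁻¹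

lemma perm_blockWord {l : List Heis} (hl : ∀ s ∈ l, s ∈ S) :
    l.Perm (blockWord (l.count a) (l.count b) (l.count a⁻¹) (l.count b⁻¹)) := by
  rw [List.perm_iff_count]
  intro c
  by_cases hc : c ∈ S
  · rcases hc with rfl | rfl | rfl | rfl <;> simp [blockWord, List.count_replicate, a, b, inv_def]
  · rw [List.count_eq_zero.2 fun h => hc (hl c h)]
    obtain ⟨h₁, h₂, h₃, h₄⟩ : c ≠ a ∧ c ≠ b ∧ c ≠ a⁻¹ ∧ c ≠ b⁻¹ := by simpa [S] using hc
    simp [blockWord, List.count_replicate, h₁.symm, h₂.symm, h₃.symm, h₄.symm]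

/-- The left-hand side bounds the `z`-coordinate of a window `a M₁ M₂ a⁻¹` in which `M₂` has `p`
letters `b` (see `exists_perm_le_prod_z_window`); in each case a cyclic rotation of the block word
reaches it. -/
lemma exists_perm_blockWord_le_prod_z {α β γ δ p : ℕ} (hα : 1 ≤ α) (hγ : 1 ≤ γ) (hp : p ≤ β) :
    ∃ R : List Heis, R.Perm (blockWord α β γ δ) ∧
      (β + (γ - 1) * δ + (α - γ) * p : ℤ) ≤ R.prod.z := by
  have hperm : ∀ R : List Heis, (∀ c, R.count c = (blockWord α β γ δ).count c) →
      R.Perm (blockWord α β γ δ) := fun R h => List.perm_iff_count.2 h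
  have hα' : (1 : ℤ) ≤ α := by exact_mod_cast hα
  have hγ' : (1 : ℤ) ≤ γ := by exact_mod_cast hγ
  have hp' : (p : ℤ) ≤ β := by exact_mod_cast hp
  rcases le_or_gt γ α with hγα | hαγ <;> rcases le_or_gt δ β with hδβ | hβδ
  · exact ⟨.replicate δ b⁻¹ ++ .replicate α a ++ .replicate β b ++ .replicate γ a⁻¹,
      hperm _ fun c => by simp [blockWord]; omega, by simp; nlinarith⟩
  · exact ⟨.replicate γ a⁻¹ ++ .replicate δ b⁻¹ ++ .replicate α a ++ .replicate β b,
      hperm _ fun c => by simp [blockWord]; omega, by simp; nlinarith⟩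
  · exact ⟨blockWord α β γ δ, .refl _, by simp [blockWord]; nlinarith⟩
  · exact ⟨.replicate β b ++ .replicate γ a⁻¹ ++ .replicate δ b⁻¹ ++ .replicate α a,
      hperm _ fun c => by simp [blockWord]; omega, by simp; nlinarith⟩

lemma prod_a_cons_append_inv_a (M : List Heis) :
    (a :: (M ++ [a⁻¹])).prod = ⟨M.prod.x, M.prod.y, M.prod.z + M.prod.y⟩ := by
  ext <;> simp [a]

lemma exists_perm_le_prod_z_window {M₁ M₂ : List Heis} (hS : ∀ s ∈ M₁ ++ M₂, s ∈ S)
    (h₁ : a ∉ M₁) (h₂ : a⁻¹ ∈ M₁) (h₃ : a⁻¹ ∉ M₂) (h₄ : a ∈ M₂) :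
    ∃ R : List Heis, R.Perm (M₁ ++ M₂) ∧ (a :: (M₁ ++ M₂ ++ [a⁻¹])).prod.z ≤ R.prod.z := by
  simp only [List.mem_append, or_imp, forall_and] at hS
  have hμ := List.count_pos_iff.2 h₂
  have hν := List.count_pos_iff.2 h₄
  obtain ⟨R, hR, hRz⟩ := exists_perm_blockWord_le_prod_z
    (α := (M₁ ++ M₂).count a) (β := (M₁ ++ M₂).count b) (γ := (M₁ ++ M₂).count a⁻¹)
    (δ := (M₁ ++ M₂).count b⁻¹) (p := M₂.count b)
    (by simp; omega) (by simp; omega) (by simp)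
  refine ⟨R, hR.trans (perm_blockWord (by simpa [or_imp, forall_and] using hS)).symm,
    le_trans ?_ hRz⟩
  have hz₁ := prod_z_le_count hS.1
  have hz₂ := prod_z_le_count hS.2
  simp only [prod_a_cons_append_inv_a, List.prod_append, mul_z, mul_y, prod_x_eq_count hS.1,
    prod_y_eq_count hS.1, prod_y_eq_count hS.2, List.count_append, List.count_eq_zero.2 h₁,
    List.count_eq_zero.2 h₃] at hz₁ hz₂ ⊢
  push_cast at hz₁ hz₂ ⊢
  nlinarith

lemma prod_map_flipB_z (l : List Heis) : (l.map flipB).prod.z = -l.prod.z := by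
  rw [← map_list_prod]; rfl

lemma exists_perm_prod_eq_window {M₁ M₂ : List Heis} (hS : ∀ s ∈ M₁ ++ M₂, s ∈ S)
    (h₁ : a ∉ M₁) (h₂ : a⁻¹ ∈ M₁) (h₃ : a⁻¹ ∉ M₂) (h₄ : a ∈ M₂) :
    ∃ R : List Heis, R.Perm (M₁ ++ M₂) ∧ R.prod = (a :: (M₁ ++ M₂ ++ [a⁻¹])).prod := by
  have hmem : ∀ {s : Heis} {l : List Heis}, flipB s = s → (s ∈ l.map flipB ↔ s ∈ l) :=
    fun h => by rw [← h, List.mem_map_of_injective flipB.injective, h]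
  have hfa : flipB a⁻¹ = a⁻¹ := by simp
  obtain ⟨R₁, hR₁, hz₁⟩ := exists_perm_le_prod_z_window hS h₁ h₂ h₃ h₄
  -- `flipB` fixes `a` and `a⁻¹` and negates `z`: the upper bound for the image is a lower bound.
  obtain ⟨R₂, hR₂, hz₂⟩ := exists_perm_le_prod_z_window (M₁ := M₁.map flipB) (M₂ := M₂.map flipB)
    (by simpa [← List.map_append] using fun s hs => (preservesS_flipB s).2 (hS s hs))
    (by rwa [hmem flipB_a]) (by rwa [hmem hfa]) (by rwa [hmem hfa]) (by rwa [hmem flipB_a])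
  have hR₂' : (R₂.map flipB).Perm (M₁ ++ M₂) := by
    simpa [Function.comp_def] using hR₂.map flipB
  have hSR : ∀ s ∈ R₂.map flipB, s ∈ S := fun s hs => hS s (hR₂'.mem_iff.1 hs)
  obtain ⟨R, hR, hRz⟩ := exists_perm_prod_z_eq (hR₂'.trans hR₁.symm) hSR
    (z := (a :: (M₁ ++ M₂ ++ [a⁻¹])).prod.z) (by
      rw [Set.mem_uIcc, prod_map_flipB_z]
      left
      refine ⟨?_, hz₁⟩
      have : a :: (M₁.map flipB ++ M₂.map flipB ++ [a⁻¹]) =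
          (a :: (M₁ ++ M₂ ++ [a⁻¹])).map flipB := by
        simp
      rw [this, prod_map_flipB_z] at hz₂
      linarith)
  have hRM := hR.trans hR₂'
  have hSM : ∀ s ∈ R, s ∈ S := fun s hs => hS s (hRM.mem_iff.1 hs)
  refine ⟨R, hRM, ?_⟩
  rw [prod_a_cons_append_inv_a]
  ext
  · exact prod_x_eq_of_perm hRM hSM
  · exact prod_y_eq_of_perm hRM hSM
  · exact hRz.trans (by rw [prod_a_cons_append_inv_a])

lemma inv_a_mul (p : Heis) : a⁻¹ * p = ⟨p.x - 1, p.y, p.z - p.y⟩ := by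
  ext <;> simp [a] <;> ring

lemma exists_perm_prod_eq_inv_a_cons {u : List Heis} (hu : IsPositiveWord u)
    (ha : a ∈ u) (hz : (u.count b : ℤ) ≤ u.prod.z) :
    ∃ R : List Heis, R.Perm (u.erase a) ∧ R.prod = (a⁻¹ :: u).prod := by
  have hS := hu.forall_mem_S
  have hai := hu.count_inv_a
  have hbi := hu.count_inv_b
  obtain ⟨k, hk⟩ := Nat.exists_eq_add_one.2 (List.count_pos_iff.2 ha)
  have hu' : (u.erase a).Perm (.replicate k a ++ .replicate (u.count b) b) := by
    simpa [blockWord, hk, hai, hbi, List.replicate_succ] using (perm_blockWord hS).erase a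
  have hzu := prod_z_le_count hS
  rw [hk, hai, hbi] at hzu
  -- The required `z`, namely `z(u) - #b`, lies between the values `0` of `b^#b a^k` and `k * #b`
  -- of `a^k b^#b`.
  obtain ⟨R, hR, hRz⟩ := exists_perm_prod_z_eq
    (List.perm_append_comm (l₁ := .replicate (u.count b) b) (l₂ := .replicate k a))
    (by simp [S]; tauto) (z := u.prod.z - u.count b) (by
      rw [Set.mem_uIcc]; left
      simp only [List.prod_append, List.prod_replicate, b_pow, a_pow, mul_z, add_zero, mul_zero,
        zero_add]
      push_cast at hzu
      constructor <;> nlinarith)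
  have hRu := hR.trans (List.perm_append_comm.trans hu'.symm)
  have hSR : ∀ s ∈ R, s ∈ S := fun s hs => hS s (List.mem_of_mem_erase (hRu.mem_iff.1 hs))
  refine ⟨R, hRu, ?_⟩
  rw [List.prod_cons, inv_a_mul]
  ext
  · rw [prod_x_eq_of_perm hR hSR]
    simp [prod_x_eq_count hS, hk, hai]
  · rw [prod_y_eq_of_perm hR hSR]
    simp [prod_y_eq_count hS, hbi]
  · simp [hRz, prod_y_eq_count hS, hbi]

section Sequences

variable {α : Type*} (w : ℕ → α)

lemma exists_le_count_map_range' [DecidableEq α] {x : α} (hx : {t | w t = x}.Infinite) (N m : ℕ) :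
    ∃ L, m ≤ ((List.range' N L).map w).count x := by
  induction m with
  | zero => exact ⟨0, by simp⟩
  | succ m ih =>
    obtain ⟨L, hL⟩ := ih
    obtain ⟨T, hT, hTL⟩ := hx.exists_gt (N + L)
    have hmem : x ∈ (List.range' (N + L) (T + 1 - N - L)).map w :=
      List.mem_map.2 ⟨T, List.mem_range'_1.2 ⟨by omega, by omega⟩, hT⟩
    refine ⟨L + (T + 1 - N - L), ?_⟩
    rw [← List.range'_append_1, List.map_append, List.count_append]
    have := List.count_pos_iff.2 hmem
    omega

lemma exists_lt_forall_not_of_infinite {p : ℕ → Prop} (hp : {t | p t}.Infinite) (N : ℕ) :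
    ∃ t, N < t ∧ p t ∧ ∀ u, N < u → u < t → ¬ p u := by
  classical
  have h : ∃ t, N < t ∧ p t := by
    obtain ⟨t, ht, hNt⟩ := hp.exists_gt N
    exact ⟨t, hNt, ht⟩
  exact ⟨Nat.find h, (Nat.find_spec h).1, (Nat.find_spec h).2,
    fun u h₁ h₂ hu => Nat.find_min h h₂ ⟨h₁, hu⟩⟩

lemma exists_window {x y : α} (hxy : x ≠ y) (hx : {t | w t = x}.Infinite)
    (hy : {t | w t = y}.Infinite) :
    ∃ i M₁ M₂, (List.range' i (M₁.length + M₂.length + 2)).map w = x :: (M₁ ++ M₂ ++ [y]) ∧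
      x ∉ M₁ ∧ y ∈ M₁ ∧ y ∉ M₂ ∧ x ∈ M₂ := by
  classical
  obtain ⟨s, hs⟩ := hx.nonempty
  obtain ⟨t₂, ht₂, hst₂⟩ := hy.exists_gt s
  set t₁ := Nat.findGreatest (w · = x) t₂
  have ht₁ : w t₁ = x := Nat.findGreatest_spec hst₂.le hs
  have ht₁₂ : t₁ < t₂ :=
    (Nat.findGreatest_le _).lt_of_ne fun h => hxy (ht₁.symm.trans (by rwa [show t₁ = t₂ from h]))
  obtain ⟨t₃, ht₂₃, ht₃, hno₂₃⟩ := exists_lt_forall_not_of_infinite hx t₂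
  obtain ⟨t₄, ht₃₄, ht₄, hno₃₄⟩ := exists_lt_forall_not_of_infinite hy t₃
  obtain ⟨m, rfl⟩ : ∃ m, t₃ = t₁ + 1 + m := ⟨t₃ - t₁ - 1, by omega⟩
  obtain ⟨n, rfl⟩ : ∃ n, t₄ = t₁ + 1 + m + n := ⟨t₄ - (t₁ + 1 + m), by omega⟩
  refine ⟨t₁, (List.range' (t₁ + 1) m).map w, (List.range' (t₁ + 1 + m) n).map w,
    ?_, ?_, ?_, ?_, ?_⟩
  · have : List.range' t₁ (m + n + 2) =
        t₁ :: (List.range' (t₁ + 1) m ++ List.range' (t₁ + 1 + m) n ++ [t₁ + 1 + m + n]) := by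
      rw [List.range'_succ, List.range'_concat, List.range'_append_1]
      simp [add_assoc]
    simp only [List.length_map, List.length_range', this, List.map_cons, List.map_append,
      List.map_nil, ht₁, ht₄]
  · simp only [List.mem_map, List.mem_range'_1, not_exists, not_and]
    intro u hu hux
    rcases le_or_gt u t₂ with h | h
    exacts [Nat.findGreatest_is_greatest (P := (w · = x)) (by omega) h hux,
      hno₂₃ u h (by omega) hux]
  · exact List.mem_map.2 ⟨t₂, List.mem_range'_1.2 ⟨by omega, by omega⟩, ht₂⟩
  · simp only [List.mem_map, List.mem_range'_1, not_exists, not_and]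
    intro u hu huy
    rcases (by omega : u = t₁ + 1 + m ∨ t₁ + 1 + m < u) with rfl | h
    exacts [hxy (ht₃.symm.trans huy), hno₃₄ u h (by omega) huy]
  · exact List.mem_map.2 ⟨t₁ + 1 + m, List.mem_range'_1.2 ⟨le_rfl, by omega⟩, ht₃⟩

end Sequences

structure IsGeodesicRay (w : ℕ → Heis) : Prop where
  mem_S : ∀ t, w t ∈ S
  le_length : ∀ n (l : List Heis), (∀ s ∈ l, s ∈ S) → l.prod = ((List.range n).map w).prod →
    n ≤ l.length

lemma isGeodesicRay_of_wdist {w : ℕ → Heis} (hw : ∀ t, w t ∈ S)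
    (hgeo : ∀ n, wdist 1 ((List.range n).map w).prod = n) : IsGeodesicRay w where
  mem_S := hw
  le_length n l hl hp := hgeo n ▸ Nat.sInf_le ⟨l, hl, rfl, by rw [one_mul, hp]⟩

namespace IsGeodesicRay

variable {w : ℕ → Heis}

lemma map (hw : IsGeodesicRay w) {f : Heis ≃* Heis} (hf : PreservesS f) :
    IsGeodesicRay (f ∘ w) where
  mem_S t := (hf _).2 (hw.mem_S t)
  le_length n l hl hp := by
    have hl' : ∀ s ∈ l.map f.symm, s ∈ S := by
      simp only [List.mem_map, forall_exists_index, and_imp, forall_apply_eq_imp_iff₂]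
      exact fun s hs => (hf _).1 (by simpa using hl s hs)
    have hp' : (l.map f.symm).prod = ((List.range n).map w).prod := by
      rw [← map_list_prod, hp, ← List.map_map, ← map_list_prod, MulEquiv.symm_apply_apply]
    simpa using hw.le_length n _ hl' hp'

lemma le_length_of_prod_eq_segment (hw : IsGeodesicRay w) (i n : ℕ) {l : List Heis}
    (hl : ∀ s ∈ l, s ∈ S) (hp : l.prod = ((List.range' i n).map w).prod) : n ≤ l.length := by
  have hpre : ∀ s ∈ (List.range i).map w ++ l, s ∈ S := by
    simp only [List.mem_append, List.mem_map]
    rintro s (⟨t, -, rfl⟩ | hs)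
    exacts [hw.mem_S t, hl s hs]
  have := hw.le_length (i + n) _ hpre (by
    simp only [List.range_eq_range', ← List.range'_append_1, List.map_append, List.prod_append,
      hp, zero_add])
  simp only [List.length_append, List.length_map, List.length_range] at this
  omega

lemma setOf_infinite_iff (f : Heis ≃* Heis) (s : Heis) :
    {t | (f ∘ w) t = f s}.Infinite ↔ {t | w t = s}.Infinite := by
  simp

lemma forall_mem_map (hw : IsGeodesicRay w) (l : List ℕ) : ∀ s ∈ l.map w, s ∈ S := by
  simp only [List.mem_map, forall_exists_index, and_imp, forall_apply_eq_imp_iff₂]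
  exact fun t _ => hw.mem_S t

lemma not_infinite_a_and_inv_a (hw : IsGeodesicRay w) :
    ¬ ({t | w t = a}.Infinite ∧ {t | w t = a⁻¹}.Infinite) := by
  rintro ⟨ha, hai⟩
  obtain ⟨i, M₁, M₂, hW, h₁, h₂, h₃, h₄⟩ := exists_window w a_ne_inv_a ha hai
  have hS : ∀ s ∈ M₁ ++ M₂, s ∈ S := fun s hs => hw.forall_mem_map (List.range' i _) s
    (by rw [hW]; exact List.mem_cons_of_mem _ (List.mem_append_left _ hs))
  obtain ⟨R, hR, hRW⟩ := exists_perm_prod_eq_window hS h₁ h₂ h₃ h₄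
  have := hw.le_length_of_prod_eq_segment i _ (fun s hs => hS s (hR.mem_iff.1 hs))
    (hRW.trans (congrArg List.prod hW).symm)
  rw [hR.length_eq, List.length_append] at this
  omega

lemma not_infinite_and_infinite_inv (hw : IsGeodesicRay w) {s : Heis} (hs : s ∈ S) :
    ¬ ({t | w t = s}.Infinite ∧ {t | w t = s⁻¹}.Infinite) := by
  obtain ⟨f, hf, hfs⟩ := exists_preservesS_apply_eq_a hs
  have := (hw.map hf).not_infinite_a_and_inv_a
  rwa [← hfs, ← map_inv, setOf_infinite_iff, setOf_infinite_iff] at this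

lemma apply_ne_inv_a_of_forall_gt (hw : IsGeodesicRay w) (ha : {t | w t = a}.Infinite)
    (hb : {t | w t = b}.Infinite) {t₀ : ℕ} (hab : ∀ t, t₀ < t → w t = a ∨ w t = b) :
    w t₀ ≠ a⁻¹ := by
  intro h₀
  obtain ⟨m, hm⟩ := exists_le_count_map_range' w ha (t₀ + 1) 2
  obtain ⟨n, hn⟩ := exists_le_count_map_range' w hb (t₀ + 1 + m)
    (((List.range' (t₀ + 1) m).map w).count b)
  set u := (List.range' (t₀ + 1) m).map w
  set v := (List.range' (t₀ + 1 + m) n).map w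
  have huv : (List.range' t₀ (m + n + 1)).map w = a⁻¹ :: (u ++ v) := by
    rw [List.range'_succ, ← List.range'_append_1, List.map_cons, List.map_append, h₀]
  have hpos : ∀ l : List ℕ, (∀ t ∈ l, t₀ < t) → IsPositiveWord (l.map w) := by
    simp only [IsPositiveWord, List.mem_map, forall_exists_index, and_imp,
      forall_apply_eq_imp_iff₂]
    exact fun l hl t ht => hab t (hl t ht)
  have hu : IsPositiveWord u := hpos _ fun t ht => by rw [List.mem_range'_1] at ht; omega
  have hv : IsPositiveWord v := hpos _ fun t ht => by rw [List.mem_range'_1] at ht; omega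
  have hpuv : IsPositiveWord (u ++ v) := fun s hs => (List.mem_append.1 hs).elim (hu s) (hv s)
  have ha : a ∈ u ++ v := List.mem_append_left _ (List.count_pos_iff.1 (by omega))
  obtain ⟨R, hR, hRp⟩ := exists_perm_prod_eq_inv_a_cons hpuv ha
    (hu.count_b_le_prod_z_append hv hm hn)
  have := hw.le_length_of_prod_eq_segment t₀ (m + n + 1)
    (fun s hs => hpuv.forall_mem_S s (List.mem_of_mem_erase (hR.mem_iff.1 hs)))
    (hRp.trans (congrArg List.prod huv).symm)
  rw [hR.length_eq, List.length_erase_of_mem ha] at this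
  simp only [List.length_append, List.length_map, List.length_range', u, v] at this
  omega

lemma forall_eq_a_or_b (hw : IsGeodesicRay w) (ha : {t | w t = a}.Infinite)
    (hb : {t | w t = b}.Infinite) : ∀ t, w t = a ∨ w t = b := by
  by_contra! h
  obtain ⟨t, ht⟩ := h
  have hai := Set.not_infinite.1 fun h => hw.not_infinite_and_infinite_inv (by simp [S]) ⟨ha, h⟩
  have hbi := Set.not_infinite.1 fun h => hw.not_infinite_and_infinite_inv (by simp [S]) ⟨hb, h⟩
  have hfin : {t | ¬(w t = a ∨ w t = b)}.Finite := (hai.union hbi).subset fun t ht => by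
    rcases hw.mem_S t with h | h | h | h
    exacts [absurd (.inl h) ht, absurd (.inr h) ht, .inl h, .inr h]
  obtain ⟨t₀, ht₀, hmax⟩ := hfin.exists_maximal ⟨t, by simpa using ht⟩
  have hab : ∀ t, t₀ < t → w t = a ∨ w t = b := fun t h =>
    by_contra fun hn => h.not_ge (hmax hn h.le)
  rcases mem_S_iff.1 (hw.mem_S t₀) with h | h | h | h
  · exact ht₀ (.inl h)
  · exact ht₀ (.inr h)
  · exact hw.apply_ne_inv_a_of_forall_gt ha hb hab h
  · refine (hw.map preservesS_swapAB).apply_ne_inv_a_of_forall_gt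
      (by rwa [← swapAB_b, setOf_infinite_iff]) (by rwa [← swapAB_a, setOf_infinite_iff])
      (fun t ht => (hab t ht).symm.imp (by simp [·]) (by simp [·])) (by simp [h])

lemma forall_eq_or_eq (hw : IsGeodesicRay w) {s t : Heis} (hst : s ≠ t)
    (hs : {τ | w τ = s}.Infinite) (ht : {τ | w τ = t}.Infinite) : ∀ τ, w τ = s ∨ w τ = t := by
  have hsS : s ∈ S := let ⟨τ, hτ⟩ := hs.nonempty; hτ ▸ hw.mem_S τ
  have htS : t ∈ S := let ⟨τ, hτ⟩ := ht.nonempty; hτ ▸ hw.mem_S τ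
  have hts : t ≠ s⁻¹ := by
    rintro rfl
    exact hw.not_infinite_and_infinite_inv hsS ⟨hs, ht⟩
  obtain ⟨f, hf, hfs, hft⟩ := exists_preservesS_apply_eq_a_and_apply_eq_b hsS htS hst hts
  intro τ
  have := (hw.map hf).forall_eq_a_or_b (by rwa [← hfs, setOf_infinite_iff])
    (by rwa [← hft, setOf_infinite_iff]) τ
  rwa [← hfs, ← hft, Function.comp_apply, f.injective.eq_iff, f.injective.eq_iff] at this

end IsGeodesicRay

end Heis

open Heis in
/-- No infinite geodesic word in `H₃` (with generating set `S = {a,b,a⁻¹,b⁻¹}`) uses three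
or more elements of `S` as letters with at least two of them occurring infinitely often:
equivalently, every infinite geodesic word either draws its letters from at most two
elements of `S`, or has at most one letter occurring infinitely often (i.e. is a finite
prefix followed by a single repeated letter). -/
theorem stmt17 (w : ℕ → Heis) (hw : ∀ t : ℕ, w t ∈ S)
    (hgeo : ∀ n : ℕ, wdist 1 (((List.range n).map w).prod) = n) :
    ¬ (3 ≤ {s : Heis | ∃ t, w t = s}.ncard ∧
        2 ≤ {s : Heis | {t : ℕ | w t = s}.Infinite}.ncard) := by
  rintro ⟨h3, h2⟩
  have hray := isGeodesicRay_of_wdist hw hgeo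
  have hfin : {s : Heis | {t : ℕ | w t = s}.Infinite}.Finite :=
    finite_S.subset fun s hs => let ⟨t, ht⟩ := hs.nonempty; ht ▸ hw t
  obtain ⟨s, hs, t, ht, hst⟩ := (Set.one_lt_ncard hfin).1 (by omega)
  have hsub : {s : Heis | ∃ τ, w τ = s} ⊆ {s, t} := by
    rintro _ ⟨τ, rfl⟩
    exact hray.forall_eq_or_eq hst hs ht τ
  have := Set.ncard_le_ncard hsub
  rw [Set.ncard_pair hst] at this
  omega
end

section
/- Let G = ⟨a, b | [a,[a,b]] central relations making G nilpotent of class 3, specifically [a,g] = [b,g] = [a,h] = [b,h] = e where c = [a,b], g = [a,c], h = [b,c]⟩, the free nilpotent group of class 3 on two generators. If w is a word in the letters {a,b} of length 2l with w̄ = g^m h^n (ab)^l-bar (i.e., w̄ equals g^m h^n times the element represented by (ab)^l), then m − n ≥ 0, and m − n > 0 unless w = (ab)^l. -/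
/-!
Sending `a ↦ (0,0,0,1)` and `b ↦ (0,0,1,0)` defines a homomorphism from `G` to an explicit group
of integer quadruples `(d, k, p, q)` in which `g` and `h` become the central elements `(±2,0,0,0)`.
For the image of a word `w`, the quantity `E(w) = d − k + ∑_{i ≤ #b} i²` is unchanged by appending
`a` and grows by `(#a − #b − 1)²` on appending `b` (letters counted before the new one). So `E(w)`
is a sum of squares, one for each `b` of `w`, and it vanishes only for `w = (ab)^p a^r`. If
`w̄ = g^m h^n (ab)^l`, then `w` has `l` letters of each kind and `E(w) = 2(m − n) + E((ab)^l) = 2(m − n)`.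
-/

namespace Stmt19

/-- The commutator with the convention of the paper: `[u,v] = u⁻¹v⁻¹uv`. -/
def pcomm {G : Type*} [Group G] (u v : G) : G := u⁻¹ * v⁻¹ * u * v

/-- The generator `a` of the free group on two generators. -/
def A : FreeGroup Bool := FreeGroup.of true
/-- The generator `b`. -/
def B : FreeGroup Bool := FreeGroup.of false
/-- `c = [a,b]`. -/
def C : FreeGroup Bool := pcomm A B
/-- `g = [a,c]`. -/
def Gg : FreeGroup Bool := pcomm A C
/-- `h = [b,c]`. -/
def Hh : FreeGroup Bool := pcomm B C

/-- The relations `[a,g] = [b,g] = [a,h] = [b,h] = e` making the group nilpotent of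
class 3 (the free nilpotent group of class 3 on two generators). -/
def rels : Set (FreeGroup Bool) := {pcomm A Gg, pcomm B Gg, pcomm A Hh, pcomm B Hh}

/-- The group `G = ⟨a, b ∣ [a,g] = [b,g] = [a,h] = [b,h] = e⟩`. -/
abbrev G := PresentedGroup rels

/-- The projection from the free group to `G`. -/
def π : FreeGroup Bool →* G := PresentedGroup.mk rels

lemma map_pcomm {H K : Type*} [Group H] [Group K] (f : H →* K) (u v : H) :
    f (pcomm u v) = pcomm (f u) (f v) := by
  simp [pcomm]

/-- Coordinates `(d, k, p, q)` of `g^(d/2) c^k b^p a^q` in the quotient `G/⟨gh⟩`. -/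
@[ext] structure Model where
  d : ℤ
  k : ℤ
  p : ℤ
  q : ℤ

namespace Model

instance : Mul Model :=
  ⟨fun x y => ⟨x.d + y.d + 2 * (x.q - x.p) * y.k + x.q * y.p * (x.q - 2 * x.p - y.p),
    x.k + y.k + x.q * y.p, x.p + y.p, x.q + y.q⟩⟩

instance : One Model := ⟨⟨0, 0, 0, 0⟩⟩

instance : Inv Model :=
  ⟨fun x => ⟨-x.d + 2 * (x.q - x.p) * x.k - x.p * x.q * (x.q - x.p),
    x.p * x.q - x.k, -x.p, -x.q⟩⟩

@[simp] lemma mul_d (x y : Model) :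
    (x * y).d = x.d + y.d + 2 * (x.q - x.p) * y.k + x.q * y.p * (x.q - 2 * x.p - y.p) := rfl
@[simp] lemma mul_k (x y : Model) : (x * y).k = x.k + y.k + x.q * y.p := rfl
@[simp] lemma mul_p (x y : Model) : (x * y).p = x.p + y.p := rfl
@[simp] lemma mul_q (x y : Model) : (x * y).q = x.q + y.q := rfl
@[simp] lemma one_d : (1 : Model).d = 0 := rfl
@[simp] lemma one_k : (1 : Model).k = 0 := rfl
@[simp] lemma one_p : (1 : Model).p = 0 := rfl
@[simp] lemma one_q : (1 : Model).q = 0 := rfl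
@[simp] lemma inv_d (x : Model) :
    x⁻¹.d = -x.d + 2 * (x.q - x.p) * x.k - x.p * x.q * (x.q - x.p) := rfl
@[simp] lemma inv_k (x : Model) : x⁻¹.k = x.p * x.q - x.k := rfl
@[simp] lemma inv_p (x : Model) : x⁻¹.p = -x.p := rfl
@[simp] lemma inv_q (x : Model) : x⁻¹.q = -x.q := rfl

instance : Group Model where
  mul_assoc x y z := by ext <;> simp <;> ring
  one_mul x := by ext <;> simp
  mul_one x := by ext <;> simp
  inv_mul_cancel x := by ext <;> simp <;> ring

def central (d : ℤ) : Model := ⟨d, 0, 0, 0⟩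

lemma pcomm_central (x : Model) (d : ℤ) : pcomm x (central d) = 1 := by
  ext <;> simp [pcomm, central] <;> ring

lemma central_mul_central (d e : ℤ) : central d * central e = central (d + e) := by
  ext <;> simp [central]

lemma central_zpow (d m : ℤ) : central d ^ m = central (m * d) := by
  induction m using Int.induction_on with
  | zero => rw [zpow_zero, zero_mul]; rfl
  | succ n ih => rw [zpow_add_one, ih]; ext <;> simp [central]; ring
  | pred n ih => rw [zpow_sub_one, ih]; ext <;> simp [central]; ring

end Model

open Model

def letter (s : Bool) : Model := if s then ⟨0, 0, 0, 1⟩ else ⟨0, 0, 1, 0⟩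

def abWord (l : ℕ) : List Bool := (List.replicate l [true, false]).flatten

lemma abWord_succ (l : ℕ) : abWord (l + 1) = abWord l ++ [true, false] := by
  simp [abWord, List.replicate_succ']

@[simp] lemma count_true_abWord (l : ℕ) : (abWord l).count true = l := by
  induction l with
  | zero => rfl
  | succ l ih => simp [abWord_succ, ih]

@[simp] lemma count_false_abWord (l : ℕ) : (abWord l).count false = l := by
  induction l with
  | zero => rfl
  | succ l ih => simp [abWord_succ, ih]

lemma prod_map_abWord {M : Type*} [Monoid M] (f : Bool → M) (l : ℕ) :
    ((abWord l).map f).prod = (f true * f false) ^ l := by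
  simp [abWord, List.map_flatten, List.prod_flatten]

def eval (w : List Bool) : Model := (w.map letter).prod

lemma lift_C : FreeGroup.lift letter C = ⟨0, 1, 0, 0⟩ := by
  ext <;> simp [C, pcomm, A, B, letter]

lemma lift_Gg : FreeGroup.lift letter Gg = central 2 := by
  ext <;> simp [Gg, pcomm, lift_C, A, letter, central]

lemma lift_Hh : FreeGroup.lift letter Hh = central (-2) := by
  ext <;> simp [Hh, pcomm, lift_C, B, letter, central]

lemma lift_rels : ∀ r ∈ rels, FreeGroup.lift letter r = 1 := by
  rintro r (rfl | rfl | rfl | rfl) <;>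
    simp only [map_pcomm, lift_Gg, lift_Hh, pcomm_central]

def toModel : G →* Model := PresentedGroup.toGroup lift_rels

lemma toModel_π (x : FreeGroup Bool) : toModel (π x) = FreeGroup.lift letter x := rfl

lemma toModel_prod (w : List Bool) :
    toModel (w.map (fun s => if s then π A else π B)).prod = eval w := by
  rw [map_list_prod, List.map_map, eval]
  congr 1
  refine List.map_congr_left fun s _ => ?_
  cases s <;> simp [toModel_π, A, B, letter]

lemma eval_append (w v : List Bool) : eval (w ++ v) = eval w * eval v := by
  simp [eval]

@[simp] lemma eval_singleton (s : Bool) : eval [s] = letter s := by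
  simp [eval]

lemma eval_cons (s : Bool) (w : List Bool) : eval (s :: w) = letter s * eval w :=
  List.prod_cons

lemma eval_p (w : List Bool) : (eval w).p = w.count false := by
  induction w with
  | nil => rfl
  | cons s w ih => cases s <;> simp [eval_cons, letter, ih, add_comm]

lemma eval_q (w : List Bool) : (eval w).q = w.count true := by
  induction w with
  | nil => rfl
  | cons s w ih => cases s <;> simp [eval_cons, letter, ih, add_comm]

def energy (w : List Bool) : ℤ :=
  (eval w).d - (eval w).k + ∑ i ∈ Finset.range (w.count false), ((i : ℤ) + 1) ^ 2

lemma energy_append_true (w : List Bool) : energy (w ++ [true]) = energy w := by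
  simp [energy, eval_append, letter]

lemma energy_append_false (w : List Bool) :
    energy (w ++ [false]) = energy w + ((w.count true : ℤ) - w.count false - 1) ^ 2 := by
  simp only [energy, eval_append, List.count_append, List.count_singleton_self,
    Finset.sum_range_succ, mul_d, mul_k, ← eval_p, ← eval_q]
  simp [eval, letter]
  ring

lemma energy_nonneg (w : List Bool) : 0 ≤ energy w := by
  induction w using List.reverseRecOn with
  | nil => rfl
  | append_singleton w s ih =>
    cases s
    · rw [energy_append_false]; positivity
    · rwa [energy_append_true]

lemma exists_eq_abWord_append_of_energy_eq_zero {w : List Bool} (hw : energy w = 0) :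
    ∃ r, w = abWord (w.count false) ++ List.replicate r true := by
  induction w using List.reverseRecOn with
  | nil => exact ⟨0, rfl⟩
  | append_singleton w s ih =>
    cases s
    · rw [energy_append_false] at hw
      obtain ⟨hw, hsq⟩ := (add_eq_zero_iff_of_nonneg (energy_nonneg w) (sq_nonneg _)).mp hw
      obtain ⟨r, hr⟩ := ih hw
      have hr1 : r = 1 := by
        rw [hr] at hsq
        simp [List.count_replicate] at hsq
        omega
      refine ⟨0, ?_⟩
      rw [hr, hr1]
      simp [abWord_succ]
    · obtain ⟨r, hr⟩ := ih (by rwa [energy_append_true] at hw)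
      exact ⟨r + 1, by rw [hr]; simp [List.count_replicate, List.replicate_succ']⟩

lemma count_eq_of_eval_eq_central_mul {w v : List Bool} {d : ℤ}
    (h : eval w = central d * eval v) (s : Bool) : w.count s = v.count s := by
  cases s
  · have hp := congrArg Model.p h
    simp only [mul_p, central, eval_p, zero_add] at hp
    exact_mod_cast hp
  · have hq := congrArg Model.q h
    simp only [mul_q, central, eval_q, zero_add] at hq
    exact_mod_cast hq

lemma energy_eq_of_eval_eq_central_mul {w v : List Bool} {d : ℤ}
    (h : eval w = central d * eval v) : energy w = d + energy v := by
  rw [energy, energy, count_eq_of_eval_eq_central_mul h, h]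
  simp [central]
  ring

lemma energy_abWord (l : ℕ) : energy (abWord l) = 0 := by
  induction l with
  | zero => rfl
  | succ l ih =>
    rw [abWord_succ, ← List.singleton_append, ← List.append_assoc, energy_append_false,
      energy_append_true, ih]
    simp

theorem stmt19_general (l : ℕ) (w : List Bool)
    (m n : ℤ)
    (hrep : (w.map (fun s => if s then π A else π B)).prod
      = (π Gg) ^ m * (π Hh) ^ n * (π A * π B) ^ l) :
    0 ≤ m - n ∧ (w ≠ (List.replicate l [true, false]).flatten → 0 < m - n) := by
  have hw : eval w = central (2 * (m - n)) * eval (abWord l) := by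
    have h := congrArg toModel hrep
    rw [show (π A * π B) ^ l = _ from (prod_map_abWord (fun s => if s then π A else π B) l).symm,
      toModel_prod, map_mul, map_mul, map_zpow, map_zpow, toModel_π, toModel_π, lift_Gg, lift_Hh,
      central_zpow, central_zpow, central_mul_central, toModel_prod] at h
    rw [h]
    congr 2
    ring
  have hb : w.count false = l := by simpa using count_eq_of_eval_eq_central_mul hw false
  have ha : w.count true = l := by simpa using count_eq_of_eval_eq_central_mul hw true
  have hE : energy w = 2 * (m - n) := by
    rw [energy_eq_of_eval_eq_central_mul hw, energy_abWord, add_zero]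
  have hE0 := energy_nonneg w
  refine ⟨by linarith, fun hne => lt_of_le_of_ne (by linarith) fun hmn => hne ?_⟩
  obtain ⟨r, hr⟩ := exists_eq_abWord_append_of_energy_eq_zero (by linarith : energy w = 0)
  have hr0 : r = 0 := by
    have := congrArg (List.count true) hr
    simp [ha, hb] at this
    omega
  rw [hr, hb, hr0, List.replicate_zero, List.append_nil, abWord]

/-- If `w` is a word in the letters `{a,b}` (encoded as a list of booleans, `true ↦ a`,
`false ↦ b`) of length `2l` representing `g^m h^n (ab)^l` in `G`, then `m − n ≥ 0`, and
`m − n > 0` unless `w = (ab)^l`. -/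
theorem stmt19 (l : ℕ) (w : List Bool) (hlen : w.length = 2 * l)
    (m n : ℤ)
    (hrep : (w.map (fun s => if s then π A else π B)).prod
      = (π Gg) ^ m * (π Hh) ^ n * (π A * π B) ^ l) :
    0 ≤ m - n ∧ (w ≠ (List.replicate l [true, false]).flatten → 0 < m - n) :=
  stmt19_general l w m n hrep

end Stmt19
end
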